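/- arXiv:1810.10298 — 4 statements merged into one kernel-verified Lean document; each statement's English description precedes it below -/
import Mathlib

section
/- Let (a_{ij}, b_j) and (â_{ij}, b̂_j) be two s-stage Runge-Kutta coefficient schemes that are symplectic conjugated, i.e., b_i â_{ij} + b̂_j a_{ji} = b_i b̂_j and b_j = b̂_j for all i,j. If (a_{ij}, b_j) satisfies a_{1j} = 0 for all j (hypothesis H1) and a_{sj} = b_j for all j (hypothesis H3) with all b_j nonzero, then â_{is} = 0 for all i and â_{i1} = b̂_1 for all i. -/
section SymplecticConjugate

variable {ι R : Type*} [CommRing R] [NoZeroDivisors R]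
  {A Ahat : Matrix ι ι R} {b bhat : ι → R} {i k : ι}

theorem apply_eq_zero_of_symplectic_conj_of_apply_eq_weight
    (hconj : b i * Ahat i k + bhat k * A k i = b i * bhat k)
    (hA : A k i = b i) (hb : b i ≠ 0) : Ahat i k = 0 := by
  have h : b i * Ahat i k = 0 := by
    rw [hA] at hconj
    linear_combination hconj
  exact (mul_eq_zero.mp h).resolve_left hb

theorem apply_eq_weight_of_symplectic_conj_of_apply_eq_zero
    (hconj : b i * Ahat i k + bhat k * A k i = b i * bhat k)
    (hA : A k i = 0) (hb : b i ≠ 0) : Ahat i k = bhat k := by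
  have h : b i * (Ahat i k - bhat k) = 0 := by
    rw [hA] at hconj
    linear_combination hconj
  exact sub_eq_zero.mp ((mul_eq_zero.mp h).resolve_left hb)

end SymplecticConjugate

theorem symplectic_conjugate_H1'_H2'_general
    (n : ℕ) (A Ahat : Matrix (Fin (n + 1)) (Fin (n + 1)) ℝ)
    (b bhat : Fin (n + 1) → ℝ)
    (hconj : ∀ i j, b i * Ahat i j + bhat j * A j i = b i * bhat j)
    (hH1 : ∀ j, A 0 j = 0)
    (hH3 : ∀ j, A (Fin.last n) j = b j)
    (hbne : ∀ j, b j ≠ 0) :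
    (∀ i, Ahat i (Fin.last n) = 0) ∧ (∀ i, Ahat i 0 = bhat 0) :=
  ⟨fun i => apply_eq_zero_of_symplectic_conj_of_apply_eq_weight (hconj i _) (hH3 i) (hbne i),
    fun i => apply_eq_weight_of_symplectic_conj_of_apply_eq_zero (hconj i _) (hH1 i) (hbne i)⟩

/-- If symplectic conjugated schemes (A,b), (Â,b̂) satisfy H1 and H3 for A
with nonzero weights, then Â satisfies H1' (â_{is} = 0) and H2' (â_{i1} = b̂_1). -/
theorem symplectic_conjugate_H1'_H2'
    (n : ℕ) (A Ahat : Matrix (Fin (n + 1)) (Fin (n + 1)) ℝ)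
    (b bhat : Fin (n + 1) → ℝ)
    (hconj : ∀ i j, b i * Ahat i j + bhat j * A j i = b i * bhat j)
    (hbeq : ∀ j, b j = bhat j)
    (hH1 : ∀ j, A 0 j = 0)
    (hH3 : ∀ j, A (Fin.last n) j = b j)
    (hbne : ∀ j, b j ≠ 0) :
    (∀ i, Ahat i (Fin.last n) = 0) ∧ (∀ i, Ahat i 0 = bhat 0) :=
  symplectic_conjugate_H1'_H2'_general n A Ahat b bhat hconj hH1 hH3 hbne
end

section
/- Under hypotheses H1, H2, H3 and simplifying assumption D(r), for 1 ≤ k ≤ r one has b C^k A⁻ A_1 = 0, where A_1 denotes the first column of A, C = diag(c), and A⁻ is the block pseudo-inverse of A. -/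
/-!
By D(k), `b C^k = b - k (b C^{k-1}) A`, and `b = e_s A` by H3, so `b C^k` lies in the row space
of `A`. By H1 and H2, `A⁻` is a generalized inverse of `A`, i.e. `A A⁻ A = A`, so `A⁻ A` fixes
the row space of `A` and `b C^k A⁻ A = b C^k`. The first entry of this row is `b_1 c_1^k = 0`.
-/

open Matrix BigOperators Finset

theorem Matrix.mul_mul_self_of_submatrix_succ_mul_eq_one {R : Type*} [Semiring R] {n : ℕ}
    (A G : Matrix (Fin (n + 1)) (Fin (n + 1)) R) (hA : ∀ j, A 0 j = 0) (hG : ∀ j, G 0 j = 0)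
    (hAG : A.submatrix Fin.succ Fin.succ * G.submatrix Fin.succ Fin.succ = 1) :
    A * G * A = A := by
  have hAG_succ : ∀ p q : Fin n, (A * G) p.succ q.succ = (1 : Matrix (Fin n) (Fin n) R) p q := by
    intro p q
    rw [← hAG, mul_apply, Fin.sum_univ_succ, hG, mul_zero, zero_add]
    rfl
  ext m l
  induction m using Fin.cases with
  | zero => simp [mul_apply, hA]
  | succ p =>
    rw [mul_apply, Fin.sum_univ_succ, hA, mul_zero, zero_add]
    simp [hAG_succ, one_apply]

theorem mul_pow_eq_vecMul_of_simplifying_D {ι K : Type*} [Fintype ι] [DecidableEq ι] [Field K]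
    [CharZero K] (A : Matrix ι ι K) (b c : ι → K) (s : ι) (hs : ∀ j, A s j = b j)
    {k : ℕ} (hk : k ≠ 0)
    (hD : ∀ j, ∑ i, b i * c i ^ (k - 1) * A i j = b j * (1 - c j ^ k) / k) :
    (fun i => b i * c i ^ k) = (Pi.single s 1 - (k : K) • fun i => b i * c i ^ (k - 1)) ᵥ* A := by
  ext j
  have hkK : (k : K) ≠ 0 := Nat.cast_ne_zero.mpr hk
  simp only [sub_vecMul, smul_vecMul, single_one_vecMul, Pi.sub_apply, Pi.smul_apply, row_apply,
    hs, smul_eq_mul]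
  rw [vecMul, dotProduct]
  simp only [hD]
  field_simp
  ring

theorem bCk_Aminus_A1_general
    (n : ℕ) (A Aminus : Matrix (Fin (n + 2)) (Fin (n + 2)) ℝ)
    (b c : Fin (n + 2) → ℝ) (r : ℕ)
    (hc1 : c 0 = 0)
    (hH1 : ∀ j, A 0 j = 0)
    (hAm_row : ∀ j, Aminus 0 j = 0)
    (hAm_left : ∀ i j : Fin (n + 1),
      ∑ k : Fin (n + 1), A i.succ k.succ * Aminus k.succ j.succ = if i = j then 1 else 0)
    (hH3 : ∀ j, A (Fin.last (n + 1)) j = b j)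
    (hD : ∀ k : ℕ, 1 ≤ k → k ≤ r → ∀ j,
      ∑ i, b i * c i ^ (k - 1) * A i j = b j * (1 - c j ^ k) / k) :
    ∀ k : ℕ, 1 ≤ k → k ≤ r →
      ∑ j, (∑ i, b i * c i ^ k * Aminus i j) * A j 0 = 0 := by
  intro k hk hkr
  have hk0 : k ≠ 0 := Nat.one_le_iff_ne_zero.mp hk
  have hGen : A * Aminus * A = A :=
    A.mul_mul_self_of_submatrix_succ_mul_eq_one Aminus hH1 hAm_row
      (by ext i j; simpa [mul_apply, one_apply] using hAm_left i j)
  have hRow := mul_pow_eq_vecMul_of_simplifying_D A b c _ hH3 hk0 (hD k hk hkr)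
  change ((fun i => b i * c i ^ k) ᵥ* Aminus ᵥ* A) 0 = 0
  rw [hRow, vecMul_vecMul, vecMul_vecMul, ← Matrix.mul_assoc, hGen, ← hRow]
  simp [hc1, hk0]

/-- Under H1, H2, H3 and D(r), for 1 ≤ k ≤ r one has b C^k A⁻ A_1 = 0,
where A_1 is the first column of A. -/
theorem bCk_Aminus_A1
    (n : ℕ) (A Aminus : Matrix (Fin (n + 2)) (Fin (n + 2)) ℝ)
    (b c : Fin (n + 2) → ℝ) (r : ℕ)
    (hc : ∀ i, c i = ∑ j, A i j)
    (hc1 : c 0 = 0)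
    (hH1 : ∀ j, A 0 j = 0)
    (hAm_row : ∀ j, Aminus 0 j = 0)
    (hAm_col : ∀ i, Aminus i 0 = 0)
    (hAm_left : ∀ i j : Fin (n + 1),
      ∑ k : Fin (n + 1), A i.succ k.succ * Aminus k.succ j.succ = if i = j then 1 else 0)
    (hAm_right : ∀ i j : Fin (n + 1),
      ∑ k : Fin (n + 1), Aminus i.succ k.succ * A k.succ j.succ = if i = j then 1 else 0)
    (hH3 : ∀ j, A (Fin.last (n + 1)) j = b j)
    (hD : ∀ k : ℕ, 1 ≤ k → k ≤ r → ∀ j,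
      ∑ i, b i * c i ^ (k - 1) * A i j = b j * (1 - c j ^ k) / k) :
    ∀ k : ℕ, 1 ≤ k → k ≤ r →
      ∑ j, (∑ i, b i * c i ^ k * Aminus i j) * A j 0 = 0 :=
  bCk_Aminus_A1_general n A Aminus b c r hc1 hH1 hAm_row hAm_left hH3 hD
end

section
/- Let (A,b) satisfy H1, H2, H3, D(r), and let (Â,b̂) satisfy the simplifying assumption D̂(r̂): ∑_i b̂_i c_i^{k−1} â_{ij} = b̂_j(1 − c_j^k)/k for k = 1,...,r̂, with b = b̂. Then for 1 ≤ k ≤ min(r, r̂), the reduced combination b C^{k−1}(Â_1 − Â A⁻ A_1) = 0, where Â_1 and A_1 are the first columns of Â and A respectively. -/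
open Matrix BigOperators Finset

/-! By `D(k)` and `D̂(k)` with `b = b̂`, the row vector `x = b C^{k-1}` satisfies `x Â = x A`.
Since `A` has zero first row and `A⁻` inverts its trailing block, `A A⁻ A = A`, so
`x Â A⁻ A = x A A⁻ A = x A = x Â`; the first column of this identity is the claim. -/

namespace Matrix

variable {R : Type*}

theorem mul_mul_self_of_zero_row_of_submatrix_succ_mul_eq_one [Semiring R] {n : ℕ}
    (A Aminus : Matrix (Fin (n + 1)) (Fin (n + 1)) R)
    (hA : ∀ j, A 0 j = 0) (hrow : ∀ j, Aminus 0 j = 0) (hcol : ∀ i, Aminus i 0 = 0)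
    (hinv : A.submatrix Fin.succ Fin.succ * Aminus.submatrix Fin.succ Fin.succ = 1) :
    A * Aminus * A = A := by
  ext i j
  cases i using Fin.cases with
  | zero => simp [mul_apply, hA]
  | succ i =>
    have hzero : (A * Aminus) i.succ 0 = 0 := by simp [mul_apply, hcol]
    have hsucc : ∀ l, (A * Aminus) i.succ l.succ = (1 : Matrix (Fin n) (Fin n) R) i l := by
      intro l
      rw [← hinv, mul_apply, mul_apply, Fin.sum_univ_succ, hrow]
      simp
    rw [mul_apply, Fin.sum_univ_succ, hzero]
    simp [hsucc, one_apply]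

theorem vecMul_sub_mul_mul_eq_zero [Ring R] {m : Type*} [Fintype m] {x : m → R}
    {A Ahat Aminus : Matrix m m R} (hA : A * Aminus * A = A) (hx : x ᵥ* Ahat = x ᵥ* A) :
    x ᵥ* (Ahat - Ahat * Aminus * A) = 0 := by
  have : x ᵥ* (Ahat * Aminus * A) = x ᵥ* Ahat := by
    rw [Matrix.mul_assoc, ← vecMul_vecMul, hx, vecMul_vecMul, ← Matrix.mul_assoc, hA]
  rw [vecMul_sub, this, sub_self]

end Matrix

theorem reduced_combination_one_general
    (n : ℕ) (A Ahat Aminus : Matrix (Fin (n + 2)) (Fin (n + 2)) ℝ)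
    (b bhat c : Fin (n + 2) → ℝ) (r rhat : ℕ)
    (hbeq : ∀ j, b j = bhat j)
    (hH1 : ∀ j, A 0 j = 0)
    (hAm_row : ∀ j, Aminus 0 j = 0)
    (hAm_col : ∀ i, Aminus i 0 = 0)
    (hAm_left : ∀ i j : Fin (n + 1),
      ∑ k : Fin (n + 1), A i.succ k.succ * Aminus k.succ j.succ = if i = j then 1 else 0)
    (hD : ∀ k : ℕ, 1 ≤ k → k ≤ r → ∀ j,
      ∑ i, b i * c i ^ (k - 1) * A i j = b j * (1 - c j ^ k) / k)
    (hDhat : ∀ k : ℕ, 1 ≤ k → k ≤ rhat → ∀ j,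
      ∑ i, bhat i * c i ^ (k - 1) * Ahat i j = bhat j * (1 - c j ^ k) / k) :
    ∀ k : ℕ, 1 ≤ k → k ≤ min r rhat →
      ∑ i, b i * c i ^ (k - 1) *
        (Ahat i 0 - ∑ j, ∑ l, Ahat i j * Aminus j l * A l 0) = 0 := by
  intro k hk hkmin
  set x : Fin (n + 2) → ℝ := fun i ↦ b i * c i ^ (k - 1)
  have hpinv : A * Aminus * A = A := by
    refine mul_mul_self_of_zero_row_of_submatrix_succ_mul_eq_one A Aminus hH1 hAm_row hAm_col ?_
    ext i j
    simpa [mul_apply, one_apply] using hAm_left i j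
  have hx : x ᵥ* Ahat = x ᵥ* A := by
    funext j
    simp only [vecMul, dotProduct, x, hbeq] at hD ⊢
    rw [hD k hk (hkmin.trans (min_le_left _ _)) j, hDhat k hk (hkmin.trans (min_le_right _ _)) j]
  have hsum : ∀ i, ∑ j, ∑ l, Ahat i j * Aminus j l * A l 0 = (Ahat * Aminus * A) i 0 := by
    intro i
    simp only [mul_apply, sum_mul]
    exact sum_comm
  simpa [vecMul, dotProduct, hsum, x] using congrFun (vecMul_sub_mul_mul_eq_zero hpinv hx) 0

/-- With (A,b) satisfying H1, H2, H3, D(r) and (Â,b̂) satisfying D̂(r̂)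
with b = b̂ and shared nodes, for 1 ≤ k ≤ min(r,r̂) the reduced combination
b C^{k−1}(Â_1 − Â A⁻ A_1) vanishes. -/
theorem reduced_combination_one
    (n : ℕ) (A Ahat Aminus : Matrix (Fin (n + 2)) (Fin (n + 2)) ℝ)
    (b bhat c : Fin (n + 2) → ℝ) (r rhat : ℕ)
    (hc : ∀ i, c i = ∑ j, A i j)
    (hchat : ∀ i, c i = ∑ j, Ahat i j)
    (hbeq : ∀ j, b j = bhat j)
    (hc1 : c 0 = 0)
    (hH1 : ∀ j, A 0 j = 0)
    (hAm_row : ∀ j, Aminus 0 j = 0)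
    (hAm_col : ∀ i, Aminus i 0 = 0)
    (hAm_left : ∀ i j : Fin (n + 1),
      ∑ k : Fin (n + 1), A i.succ k.succ * Aminus k.succ j.succ = if i = j then 1 else 0)
    (hAm_right : ∀ i j : Fin (n + 1),
      ∑ k : Fin (n + 1), Aminus i.succ k.succ * A k.succ j.succ = if i = j then 1 else 0)
    (hH3 : ∀ j, A (Fin.last (n + 1)) j = b j)
    (hD : ∀ k : ℕ, 1 ≤ k → k ≤ r → ∀ j,
      ∑ i, b i * c i ^ (k - 1) * A i j = b j * (1 - c j ^ k) / k)
    (hDhat : ∀ k : ℕ, 1 ≤ k → k ≤ rhat → ∀ j,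
      ∑ i, bhat i * c i ^ (k - 1) * Ahat i j = bhat j * (1 - c j ^ k) / k) :
    ∀ k : ℕ, 1 ≤ k → k ≤ min r rhat →
      ∑ i, b i * c i ^ (k - 1) *
        (Ahat i 0 - ∑ j, ∑ l, Ahat i j * Aminus j l * A l 0) = 0 :=
  reduced_combination_one_general n A Ahat Aminus b bhat c r rhat hbeq hH1 hAm_row hAm_col hAm_left
    hD hDhat
end

section
/- If two compatible Runge-Kutta schemes (A,b) and (Â,b̂) with b = b̂ and all b_i ≠ 0 are symplectic conjugated, and (A,b) satisfies D(r) and B(r), then (Â,b̂) satisfies Ĉ(r): ∑_j â_{ij} c_j^{k−1} = c_i^k/k for k = 1,...,r. -/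
/-! Multiplying the conjugation relation by `c_j^(k-1)` and summing over `j` turns
`b_i ∑_j â_ij c_j^(k-1)` into `b_i ∑_j b_j c_j^(k-1) - ∑_j b_j c_j^(k-1) a_ji`; `B(k)` and `D(k)`
evaluate the two sums as `b_i / k` and `b_i (1 - c_i^k) / k`, and `b_i ≠ 0` is cancelled. -/

open Matrix BigOperators Finset

theorem mul_sum_conj_mul_eq {ι K : Type*} [Fintype ι] [CommRing K]
    (A Ahat : Matrix ι ι K) (b bhat : ι → K)
    (hconj : ∀ i j, b i * Ahat i j + bhat j * A j i = b i * bhat j) (g : ι → K) (i : ι) :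
    b i * ∑ j, Ahat i j * g j = b i * ∑ j, bhat j * g j - ∑ j, bhat j * g j * A j i := by
  rw [mul_sum, mul_sum, ← sum_sub_distrib]
  exact sum_congr rfl fun j _ => by linear_combination g j * hconj i j

theorem conjugate_satisfies_Chat_general
    (s : ℕ) (A Ahat : Matrix (Fin s) (Fin s) ℝ) (b bhat c : Fin s → ℝ) (r : ℕ)
    (hbeq : ∀ j, b j = bhat j)
    (hbne : ∀ i, b i ≠ 0)
    (hconj : ∀ i j, b i * Ahat i j + bhat j * A j i = b i * bhat j)
    (hD : ∀ k : ℕ, 1 ≤ k → k ≤ r → ∀ j,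
      ∑ i, b i * c i ^ (k - 1) * A i j = b j * (1 - c j ^ k) / k)
    (hB : ∀ k : ℕ, 1 ≤ k → k ≤ r →
      ∑ i, b i * c i ^ (k - 1) = 1 / k) :
    ∀ k : ℕ, 1 ≤ k → k ≤ r → ∀ i,
      ∑ j, Ahat i j * c j ^ (k - 1) = c i ^ k / k := by
  intro k hk1 hkr i
  have hk : (k : ℝ) ≠ 0 := Nat.cast_ne_zero.mpr (by omega)
  have hsum := mul_sum_conj_mul_eq A Ahat b bhat hconj (fun j => c j ^ (k - 1)) i
  simp only [← hbeq] at hsum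
  rw [hB k hk1 hkr, hD k hk1 hkr i] at hsum
  apply mul_left_cancel₀ (hbne i)
  rw [hsum]
  field_simp
  ring

/-- if (A,b) and (Â,b̂) are symplectic conjugated compatible schemes with
b = b̂, all bᵢ ≠ 0, and (A,b) satisfies D(r) and B(r), then (Â,b̂) satisfies Ĉ(r). -/
theorem conjugate_satisfies_Chat
    (s : ℕ) (A Ahat : Matrix (Fin s) (Fin s) ℝ) (b bhat c : Fin s → ℝ) (r : ℕ)
    (hc : ∀ i, c i = ∑ j, A i j)
    (hchat : ∀ i, c i = ∑ j, Ahat i j)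
    (hbeq : ∀ j, b j = bhat j)
    (hbne : ∀ i, b i ≠ 0)
    (hconj : ∀ i j, b i * Ahat i j + bhat j * A j i = b i * bhat j)
    (hD : ∀ k : ℕ, 1 ≤ k → k ≤ r → ∀ j,
      ∑ i, b i * c i ^ (k - 1) * A i j = b j * (1 - c j ^ k) / k)
    (hB : ∀ k : ℕ, 1 ≤ k → k ≤ r →
      ∑ i, b i * c i ^ (k - 1) = 1 / k) :
    ∀ k : ℕ, 1 ≤ k → k ≤ r → ∀ i,
      ∑ j, Ahat i j * c j ^ (k - 1) = c i ^ k / k :=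
  conjugate_satisfies_Chat_general s A Ahat b bhat c r hbeq hbne hconj hD hB
end
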